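/- arXiv:2412.14650 — 3 statements merged into one kernel-verified Lean document; each statement's English description precedes it below -/
import Mathlib

section
/- Let γ > 1, c > 0, a > 0, and let f be a continuous function on [0,T) satisfying f(t) ≤ a + c∫₀ᵗ f(s)^γ ds and f(s) ≥ 0 for all t ≤ T. Then for all t with (γ−1)·c·a^(γ−1)·t < 1, we have f(t) ≤ a·(1 − (γ−1)·c·a^(γ−1)·t)^(−1/(γ−1)). -/
open MeasureTheory intervalIntegral Set Filter Topology

/-- Core Gronwall comparison on a closed interval `[0,t]`. -/
lemma gronwall_core (γ c a t : ℝ) (f : ℝ → ℝ)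
    (hγ : 1 < γ) (hc : 0 < c) (ha : 0 < a) (ht : 0 < t)
    (hf : ContinuousOn f (Set.Icc 0 t))
    (hnn : ∀ s ∈ Set.Icc (0:ℝ) t, 0 ≤ f s)
    (hineq : ∀ s ∈ Set.Icc (0:ℝ) t, f s ≤ a + c * ∫ u in (0:ℝ)..s, f u ^ γ)
    (hsmall : (γ - 1) * c * a ^ (γ - 1) * t < 1) :
    a + c * ∫ u in (0:ℝ)..t, f u ^ γ
      ≤ a * (1 - (γ - 1) * c * a ^ (γ - 1) * t) ^ (-(1 / (γ - 1))) := by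
  have hγ0 : (0:ℝ) < γ := by linarith
  have hγ1 : γ - 1 ≠ 0 := by linarith
  -- clamp f to a globally continuous function
  set clamp : ℝ → ℝ := fun s => min (max s 0) t with hclampdef
  have hclampc : Continuous clamp := (continuous_id.max continuous_const).min continuous_const
  have hmem : ∀ s, clamp s ∈ Set.Icc (0:ℝ) t :=
    fun s => ⟨le_min (le_max_right _ _) ht.le, min_le_right _ _⟩
  set fc : ℝ → ℝ := fun s => f (clamp s) with hfcdef
  have hfc : Continuous fc := hf.comp_continuous hclampc hmem
  have hfc_eq : ∀ s ∈ Set.Icc (0:ℝ) t, fc s = f s := by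
    intro s hs
    simp [hfcdef, hclampdef, max_eq_left hs.1, min_eq_left hs.2]
  have hfc_nn : ∀ s, 0 ≤ fc s := fun s => hnn _ (hmem s)
  set g : ℝ → ℝ := fun s => fc s ^ γ with hgdef
  have hg : Continuous g := by
    rw [continuous_iff_continuousAt]
    intro x
    exact (Real.continuousAt_rpow_const _ _ (Or.inr hγ0.le)).comp hfc.continuousAt
  have hgnn : ∀ s, 0 ≤ g s := fun s => Real.rpow_nonneg (hfc_nn s) _
  have hIeq : ∀ s ∈ Set.Icc (0:ℝ) t, (∫ u in (0:ℝ)..s, f u ^ γ) = ∫ u in (0:ℝ)..s, g u := by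
    intro s hs
    refine intervalIntegral.integral_congr fun u hu => ?_
    rw [uIcc_of_le hs.1] at hu
    rw [hgdef]
    simp only
    rw [hfc_eq u ⟨hu.1, hu.2.trans hs.2⟩]
  set F : ℝ → ℝ := fun s => a + c * ∫ u in (0:ℝ)..s, g u with hFdef
  have hFderiv : ∀ s : ℝ, HasDerivAt F (c * g s) s := by
    intro s
    have h1 : HasDerivAt (fun x => ∫ u in (0:ℝ)..x, g u) (g s) s :=
      intervalIntegral.integral_hasDerivAt_right (hg.intervalIntegrable _ _)
        (hg.stronglyMeasurableAtFilter _ _) hg.continuousAt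
    simpa [hFdef] using (h1.const_mul c).const_add a
  have hFcont : Continuous F := by
    rw [continuous_iff_continuousAt]
    exact fun s => (hFderiv s).continuousAt
  have hFpos : ∀ s, 0 ≤ s → 0 < F s := by
    intro s hs
    have h0 : 0 ≤ ∫ u in (0:ℝ)..s, g u :=
      intervalIntegral.integral_nonneg hs (fun u _ => hgnn u)
    have := mul_nonneg hc.le h0
    simp only [hFdef]
    linarith
  have hfcF : ∀ s ∈ Set.Icc (0:ℝ) t, fc s ≤ F s := by
    intro s hs
    rw [hfc_eq s hs]
    have h := hineq s hs
    rwa [hIeq s hs] at h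
  -- the auxiliary function H
  set H : ℝ → ℝ := fun s => F s ^ (1 - γ) + (γ - 1) * c * s with hHdef
  have hHmono : MonotoneOn H (Set.Icc (0:ℝ) t) := by
    apply monotoneOn_of_hasDerivWithinAt_nonneg (convex_Icc 0 t)
      (f' := fun s => c * g s * (1 - γ) * F s ^ (1 - γ - 1) + (γ - 1) * c)
    · apply ContinuousOn.add
      · exact hFcont.continuousOn.rpow_const fun x hx => Or.inl (hFpos x hx.1).ne'
      · exact (continuous_const.mul continuous_id).continuousOn
    · intro x hx
      rw [interior_Icc] at hx
      have h1 : HasDerivAt (fun s => F s ^ (1 - γ))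
          (c * g x * (1 - γ) * F x ^ (1 - γ - 1)) x :=
        (hFderiv x).rpow_const (Or.inl (hFpos x hx.1.le).ne')
      have h2 : HasDerivAt H (c * g x * (1 - γ) * F x ^ (1 - γ - 1) + (γ - 1) * c) x := by
        simpa [hHdef, Pi.add_def] using h1.add ((hasDerivAt_id x).const_mul ((γ - 1) * c))
      exact h2.hasDerivWithinAt
    · intro x hx
      rw [interior_Icc] at hx
      have hxmem : x ∈ Set.Icc (0:ℝ) t := ⟨hx.1.le, hx.2.le⟩
      have hFx : 0 < F x := hFpos x hx.1.le
      have hgF : g x ≤ F x ^ γ := Real.rpow_le_rpow (hfc_nn x) (hfcF x hxmem) hγ0.le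
      have hkey : g x * F x ^ (1 - γ - 1) ≤ 1 := by
        have h1 : g x * F x ^ (1 - γ - 1) ≤ F x ^ γ * F x ^ (1 - γ - 1) :=
          mul_le_mul_of_nonneg_right hgF (Real.rpow_nonneg hFx.le _)
        have h2 : F x ^ γ * F x ^ (1 - γ - 1) = 1 := by
          rw [← Real.rpow_add hFx]
          norm_num
        linarith
      have hgFnn : 0 ≤ g x * F x ^ (1 - γ - 1) :=
        mul_nonneg (hgnn x) (Real.rpow_nonneg hFx.le _)
      nlinarith [mul_nonneg (mul_nonneg (sub_nonneg.2 hγ.le) hc.le) (sub_nonneg.2 hkey)]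
  have hH0t := hHmono (Set.left_mem_Icc.2 ht.le) (Set.right_mem_Icc.2 ht.le) ht.le
  have hF0 : F 0 = a := by simp [hFdef]
  have hH0 : H 0 = a ^ (1 - γ) := by simp [hHdef, hF0]
  -- the key power inequality
  set K : ℝ := (γ - 1) * c * a ^ (γ - 1) with hKdef
  have haγ : (0:ℝ) < a ^ (1 - γ) := Real.rpow_pos_of_pos ha _
  have haa : a ^ (1 - γ) * a ^ (γ - 1) = 1 := by
    rw [← Real.rpow_add ha]; norm_num
  have hmdef : a ^ (1 - γ) - (γ - 1) * c * t = a ^ (1 - γ) * (1 - K * t) := by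
    rw [hKdef]; linear_combination ((γ - 1) * c * t) * haa
  have hm : 0 < a ^ (1 - γ) * (1 - K * t) := by
    apply mul_pos haγ
    linarith [hsmall]
  have hFt_pow : a ^ (1 - γ) * (1 - K * t) ≤ F t ^ (1 - γ) := by
    rw [← hmdef]
    have : H 0 ≤ H t := hH0t
    rw [hH0, hHdef] at this
    simp only at this
    linarith
  have hFt : 0 < F t := hFpos t ht.le
  have hexp : 1 / (1 - γ) ≤ 0 := by
    apply div_nonpos_of_nonneg_of_nonpos zero_le_one
    linarith
  have hstep : F t ≤ (a ^ (1 - γ) * (1 - K * t)) ^ (1 / (1 - γ)) := by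
    have h1 : (F t ^ (1 - γ)) ^ (1 / (1 - γ)) = F t := by
      rw [← Real.rpow_mul hFt.le, mul_one_div, div_self (by linarith : (1:ℝ) - γ ≠ 0),
        Real.rpow_one]
    calc F t = (F t ^ (1 - γ)) ^ (1 / (1 - γ)) := h1.symm
      _ ≤ (a ^ (1 - γ) * (1 - K * t)) ^ (1 / (1 - γ)) :=
          Real.rpow_le_rpow_of_nonpos hm hFt_pow hexp
  have hrhs : (a ^ (1 - γ) * (1 - K * t)) ^ (1 / (1 - γ))
      = a * (1 - K * t) ^ (-(1 / (γ - 1))) := by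
    rw [Real.mul_rpow haγ.le (by linarith : (0:ℝ) ≤ 1 - K * t)]
    have h1 : (a ^ (1 - γ)) ^ (1 / (1 - γ)) = a := by
      rw [← Real.rpow_mul ha.le, mul_one_div, div_self (by linarith : (1:ℝ) - γ ≠ 0),
        Real.rpow_one]
    have h2 : 1 / (1 - γ) = -(1 / (γ - 1)) := by
      rw [← neg_sub γ 1, div_neg]
    rw [h1, h2]
  have hfin : F t ≤ a * (1 - K * t) ^ (-(1 / (γ - 1))) := by
    rw [← hrhs]; exact hstep
  rw [hIeq t (Set.right_mem_Icc.2 ht.le)]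
  exact hfin

/-- Gronwall-type upper comparison, superlinear case: if `f` is nonnegative and
continuous on `[0,T)` and satisfies `f t ≤ a + c ∫₀ᵗ f(s)^γ ds` for `t ≤ T`
with `γ > 1`, `c > 0`, `a > 0`, then for all `t` with `(γ-1) c a^(γ-1) t < 1`,
`f t ≤ a (1 - (γ-1) c a^(γ-1) t)^(-1/(γ-1))`. -/
theorem stmt_1 (T γ c a : ℝ) (f : ℝ → ℝ)
    (hγ : 1 < γ) (hc : 0 < c) (ha : 0 < a)
    (hf : ContinuousOn f (Set.Ico 0 T))
    (hnonneg : ∀ t, 0 ≤ t → t ≤ T → 0 ≤ f t)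
    (hineq : ∀ t, 0 ≤ t → t ≤ T →
      f t ≤ a + c * ∫ s in (0:ℝ)..t, f s ^ γ) :
    ∀ t, 0 ≤ t → t ≤ T → (γ - 1) * c * a ^ (γ - 1) * t < 1 →
      f t ≤ a * (1 - (γ - 1) * c * a ^ (γ - 1) * t) ^ (-(1 / (γ - 1))) := by
  intro t ht0 htT hsmall
  have hK : 0 < (γ - 1) * c * a ^ (γ - 1) :=
    mul_pos (mul_pos (by linarith) hc) (Real.rpow_pos_of_pos ha _)
  rcases ht0.eq_or_lt with h0 | h0
  · -- t = 0
    subst h0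
    have := hineq 0 le_rfl htT
    simp only [intervalIntegral.integral_same, mul_zero, add_zero] at this
    simpa using this
  rcases lt_or_eq_of_le htT with hlt | heq
  · -- t < T
    have hsub : Set.Icc (0:ℝ) t ⊆ Set.Ico 0 T := fun x hx => ⟨hx.1, lt_of_le_of_lt hx.2 hlt⟩
    have hcore := gronwall_core γ c a t f hγ hc ha h0 (hf.mono hsub)
      (fun s hs => hnonneg s hs.1 (hs.2.trans htT))
      (fun s hs => hineq s hs.1 (hs.2.trans htT)) hsmall
    exact (hineq t ht0 htT).trans hcore
  · -- t = T
    subst heq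
    by_cases hint : IntervalIntegrable (fun s => f s ^ γ) volume 0 t
    · -- integrable case: take limits from the left
      set B : ℝ → ℝ :=
        fun s => a * (1 - (γ - 1) * c * a ^ (γ - 1) * s) ^ (-(1 / (γ - 1))) with hBdef
      have hbase : 0 < 1 - (γ - 1) * c * a ^ (γ - 1) * t := by linarith
      have hBcont : ContinuousAt B t := by
        apply ContinuousAt.mul continuousAt_const
        apply ContinuousAt.comp (g := fun x : ℝ => x ^ (-(1 / (γ - 1))))
        · exact Real.continuousAt_rpow_const _ _ (Or.inl hbase.ne')
        · exact (continuous_const.sub (continuous_const.mul continuous_id)).continuousAt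
      set I : ℝ → ℝ := fun s => ∫ u in (0:ℝ)..s, f u ^ γ with hIdef
      have hIcont : ContinuousOn I (Set.uIcc 0 t) :=
        intervalIntegral.continuousOn_primitive_interval' hint left_mem_uIcc
      have huIcc : Set.uIcc (0:ℝ) t = Set.Icc 0 t := uIcc_of_le h0.le
      have hItend : Tendsto I (𝓝[Set.Ioo 0 t] t) (𝓝 (I t)) := by
        have := hIcont t (by rw [huIcc]; exact Set.right_mem_Icc.2 h0.le)
        rw [huIcc] at this
        exact this.mono_left (nhdsWithin_mono t Set.Ioo_subset_Icc_self)
      have hneb : (𝓝[Set.Ioo 0 t] t).NeBot := by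
        rw [nhdsWithin_Ioo_eq_nhdsLT h0]
        infer_instance
      have hFt : Tendsto (fun s => a + c * I s) (𝓝[Set.Ioo 0 t] t) (𝓝 (a + c * I t)) :=
        (tendsto_const_nhds.add (hItend.const_mul c))
      have hBt : Tendsto B (𝓝[Set.Ioo 0 t] t) (𝓝 (B t)) :=
        hBcont.tendsto.mono_left nhdsWithin_le_nhds
      have hkey : ∀ s ∈ Set.Ioo (0:ℝ) t, a + c * I s ≤ B s := by
        intro s hs
        have hsub : Set.Icc (0:ℝ) s ⊆ Set.Ico 0 t :=
          fun x hx => ⟨hx.1, lt_of_le_of_lt hx.2 hs.2⟩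
        have hsmalls : (γ - 1) * c * a ^ (γ - 1) * s < 1 := by
          have := mul_lt_mul_of_pos_left hs.2 hK
          linarith
        exact gronwall_core γ c a s f hγ hc ha hs.1 (hf.mono hsub)
          (fun u hu => hnonneg u hu.1 ((hu.2.trans hs.2.le)))
          (fun u hu => hineq u hu.1 (hu.2.trans hs.2.le)) hsmalls
      have hlim : a + c * I t ≤ B t := by
        refine le_of_tendsto_of_tendsto hFt hBt ?_
        filter_upwards [eventually_mem_nhdsWithin] with s hs using hkey s hs
      exact (hineq t ht0 le_rfl).trans hlim
    · -- not integrable: the integral is zero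
      have hI0 : (∫ s in (0:ℝ)..t, f s ^ γ) = 0 := intervalIntegral.integral_undef hint
      have h1 : f t ≤ a := by
        have := hineq t ht0 le_rfl
        rwa [hI0, mul_zero, add_zero] at this
      have h2 : (1:ℝ) ≤ (1 - (γ - 1) * c * a ^ (γ - 1) * t) ^ (-(1 / (γ - 1))) := by
        apply Real.one_le_rpow_of_pos_of_le_one_of_nonpos
        · linarith
        · nlinarith [mul_pos hK h0]
        · rw [neg_nonpos]
          have : 0 < γ - 1 := by linarith
          positivity
      nlinarith
end

section
/- Let γ > 1, c > 0, a > 0, and suppose f is continuous on [0,T) with f(t) ≥ a + c∫₀ᵗ f(s)^γ ds for all t < T. Then T ≤ t∗ where t∗ = ((γ−1)·c·a^(γ−1))^(−1), i.e., the maximal existence time is bounded by the blow-up time of the comparison ODE. -/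
/-!
As long as `f` stays positive the integral is nonnegative, so `f ≥ a`; a first-exit argument
therefore gives `f > 0` on `[0, T)`. Then `F t = a + c ∫₀ᵗ f ^ γ` satisfies `F ≥ a` and
`F' = c f ^ γ ≥ c F ^ γ`, so `F ^ (1 - γ) + (γ - 1) c t` is nonincreasing and
`(γ - 1) c t < F 0 ^ (1 - γ) = a ^ (1 - γ)` for every `t < T`.
-/

open MeasureTheory intervalIntegral Set

theorem lt_on_Ico_of_forall_lt_imp_le {f : ℝ → ℝ} {x₀ T a b : ℝ}
    (hf : ContinuousOn f (Ico x₀ T)) (hba : b < a)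
    (h : ∀ t ∈ Ico x₀ T, (∀ s ∈ Ico x₀ t, b < f s) → a ≤ f t) :
    ∀ t ∈ Ico x₀ T, b < f t := by
  intro t ht
  by_contra! hft
  have hclosed : IsClosed (Icc x₀ t ∩ f ⁻¹' Iic b) :=
    (hf.mono (Icc_subset_Ico_right ht.2)).preimage_isClosed_of_isClosed isClosed_Icc isClosed_Iic
  -- the first time in `[x₀, t]` at which `f ≤ b`
  obtain ⟨t₀, ⟨ht₀, hft₀⟩, hleast⟩ := (isCompact_Icc.of_isClosed_subset hclosed
    inter_subset_left).exists_isLeast ⟨t, ⟨ht.1, le_rfl⟩, hft⟩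
  have hbefore : ∀ s ∈ Ico x₀ t₀, b < f s := fun s hs =>
    not_le.1 fun hfs => (hleast ⟨⟨hs.1, hs.2.le.trans ht₀.2⟩, hfs⟩).not_gt hs.2
  exact (hba.trans_le ((h t₀ ⟨ht₀.1, ht₀.2.trans_lt ht.2⟩ hbefore).trans hft₀)).false

theorem integral_nonneg_of_forall_Ico {g : ℝ → ℝ} {x y : ℝ} (hxy : x ≤ y)
    (hg : ∀ s ∈ Ico x y, 0 ≤ g s) : 0 ≤ ∫ s in x..y, g s := by
  refine integral_nonneg_of_ae_restrict hxy ?_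
  rw [← Measure.restrict_congr_set Ico_ae_eq_Icc]
  exact ae_restrict_of_forall_mem measurableSet_Ico hg

theorem ContinuousOn.hasDerivAt_integral_of_mem_Ioo {g : ℝ → ℝ} {x T u : ℝ}
    (hg : ContinuousOn g (Ico x T)) (hu : u ∈ Ioo x T) :
    HasDerivAt (fun t => ∫ s in x..t, g s) (g u) u :=
  integral_hasDerivAt_right
    ((hg.mono (Icc_subset_Ico_right hu.2)).intervalIntegrable_of_Icc hu.1.le)
    ((hg.mono Ioo_subset_Ico_self).stronglyMeasurableAtFilter isOpen_Ioo u hu)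
    (hg.continuousAt (Ico_mem_nhds hu.1 hu.2))

theorem ContinuousOn.continuousOn_integral_Icc {g : ℝ → ℝ} {x T t : ℝ}
    (hg : ContinuousOn g (Ico x T)) (ht : t ∈ Ico x T) :
    ContinuousOn (fun u => ∫ s in x..u, g s) (Icc x t) := by
  simpa only [uIcc_of_le ht.1] using continuousOn_primitive_interval'
    ((hg.mono (Icc_subset_Ico_right ht.2)).intervalIntegrable_of_Icc ht.1) left_mem_uIcc

theorem rpow_one_sub_add_le_of_mul_rpow_le_deriv {F F' : ℝ → ℝ} {γ c x y : ℝ} (hγ : 1 ≤ γ)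
    (hxy : x ≤ y) (hFc : ContinuousOn F (Icc x y)) (hFpos : ∀ s ∈ Icc x y, 0 < F s)
    (hF : ∀ s ∈ Ioo x y, HasDerivAt F (F' s) s) (hF' : ∀ s ∈ Ioo x y, c * F s ^ γ ≤ F' s) :
    F y ^ (1 - γ) + (γ - 1) * c * (y - x) ≤ F x ^ (1 - γ) := by
  have hanti : AntitoneOn (fun s => F s ^ (1 - γ) + (γ - 1) * c * s) (Icc x y) := by
    refine antitoneOn_of_hasDerivWithinAt_nonpos (convex_Icc x y)
      ((hFc.rpow_const fun s hs => Or.inl (hFpos s hs).ne').add (by fun_prop))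
      (f' := fun s => F' s * (1 - γ) * F s ^ (1 - γ - 1) + (γ - 1) * c) ?_ ?_ <;>
      rw [interior_Icc] <;> intro s hs
    · exact (((hF s hs).rpow_const (Or.inl (hFpos s (Ioo_subset_Icc_self hs)).ne')).add
        ((hasDerivAt_id s).const_mul _) |>.congr_deriv (by ring)).hasDerivWithinAt
    · have hFs := hFpos s (Ioo_subset_Icc_self hs)
      have hpow : 0 < F s ^ γ := Real.rpow_pos_of_pos hFs γ
      have hquot : c ≤ F' s * F s ^ (1 - γ - 1) := by
        rw [show 1 - γ - 1 = -γ by ring, Real.rpow_neg hFs.le, ← div_eq_mul_inv,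
          le_div_iff₀ hpow]
        exact hF' s hs
      linarith [mul_le_mul_of_nonneg_left hquot (sub_nonneg.2 hγ)]
  have := hanti (left_mem_Icc.2 hxy) (right_mem_Icc.2 hxy) hxy
  simp only at this
  linarith

theorem mul_lt_rpow_of_le_integral_rpow {T γ c a : ℝ} {f : ℝ → ℝ} (hγ : 1 ≤ γ) (hc : 0 ≤ c)
    (ha : 0 < a) (hf : ContinuousOn f (Ico 0 T))
    (hineq : ∀ t ∈ Ico 0 T, a + c * ∫ s in (0:ℝ)..t, f s ^ γ ≤ f t) :
    ∀ t ∈ Ico 0 T, (γ - 1) * c * t < a ^ (1 - γ) := by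
  have hγ0 : 0 ≤ γ := by linarith
  have hg : ContinuousOn (fun s => f s ^ γ) (Ico 0 T) := hf.rpow_const fun _ _ => Or.inr hγ0
  have hfpos : ∀ t ∈ Ico 0 T, 0 < f t := lt_on_Ico_of_forall_lt_imp_le hf ha fun t ht hpos => by
    have := integral_nonneg_of_forall_Ico ht.1 fun s hs => Real.rpow_nonneg (hpos s hs).le γ
    linarith [hineq t ht, mul_nonneg hc this]
  set F := fun t => a + c * ∫ s in (0:ℝ)..t, f s ^ γ
  have hFa : ∀ t ∈ Ico 0 T, a ≤ F t := fun t ht =>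
    le_add_of_nonneg_right <| mul_nonneg hc <| integral_nonneg_of_forall_Ico ht.1 fun s hs =>
      Real.rpow_nonneg (hfpos s ⟨hs.1, hs.2.trans ht.2⟩).le γ
  intro t ht
  have hsub : Icc 0 t ⊆ Ico 0 T := Icc_subset_Ico_right ht.2
  have hFpos : ∀ s ∈ Icc 0 t, 0 < F s := fun s hs => ha.trans_le (hFa s (hsub hs))
  have hFderiv : ∀ s ∈ Ioo 0 t, HasDerivAt F (c * f s ^ γ) s := fun s hs =>
    ((hg.hasDerivAt_integral_of_mem_Ioo ⟨hs.1, hs.2.trans ht.2⟩).const_mul c).const_add a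
  have hFf : ∀ s ∈ Ioo 0 t, c * F s ^ γ ≤ c * f s ^ γ := fun s hs =>
    have hs' := Ioo_subset_Icc_self hs
    mul_le_mul_of_nonneg_left (Real.rpow_le_rpow (hFpos s hs').le (hineq s (hsub hs')) hγ0) hc
  have hcmp := rpow_one_sub_add_le_of_mul_rpow_le_deriv (F := F) hγ ht.1
    (continuousOn_const.add (continuousOn_const.mul (hg.continuousOn_integral_Icc ht)))
    hFpos hFderiv hFf
  have hF0 : F 0 = a := by simp [F]
  have := Real.rpow_pos_of_pos (ha.trans_le (hFa t ht)) (1 - γ)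
  rw [hF0, sub_zero] at hcmp
  linarith

/-- Blow-up time bound: if `f` is continuous on `[0,T)` and satisfies the superlinear
integral inequality `f t ≥ a + c ∫₀ᵗ f(s)^γ ds` for all `t < T` with `γ > 1`,
`c > 0`, `a > 0`, then `T ≤ t∗ = ((γ-1) c a^(γ-1))⁻¹`. -/
theorem stmt_3 (T γ c a : ℝ) (f : ℝ → ℝ)
    (hγ : 1 < γ) (hc : 0 < c) (ha : 0 < a)
    (hf : ContinuousOn f (Set.Ico 0 T))
    (hineq : ∀ t, 0 ≤ t → t < T →
      a + c * ∫ s in (0:ℝ)..t, f s ^ γ ≤ f t) :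
    T ≤ ((γ - 1) * c * a ^ (γ - 1))⁻¹ := by
  have hbound :=
    mul_lt_rpow_of_le_integral_rpow hγ.le hc.le ha hf fun t ht => hineq t ht.1 ht.2
  by_contra! hT
  have hγc : 0 < (γ - 1) * c := mul_pos (by linarith) hc
  have hblowup : (γ - 1) * c * ((γ - 1) * c * a ^ (γ - 1))⁻¹ = a ^ (1 - γ) := by
    rw [show 1 - γ = -(γ - 1) by ring, Real.rpow_neg ha.le, mul_inv,
      mul_inv_cancel_left₀ hγc.ne']
  exact (hbound _ ⟨by positivity, hT⟩).ne hblowup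
end

section
/- Let X be distributed according to the uniform measure on the normalized Stiefel manifold S_{N,r}, V ∈ S_{N,r} fixed, and m_{ij}(X) = (1/N)·⟨vᵢ, xⱼ⟩. Then there exist constants C(r), c(r) > 0 such that for every t > 0, P(|m_{ij}(X)| < t/√N) ≤ (4/√(2π))·t + C(r)·exp(−c(r)·t·√N). -/
open MeasureTheory Real Finset
open scoped ENNReal

noncomputable def pdf1 (x : ℝ) : ℝ := (Real.sqrt (2 * Real.pi))⁻¹ * Real.exp (-(1/2 : ℝ) * x ^ 2)

lemma pdf1_nonneg (x : ℝ) : 0 ≤ pdf1 x := by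
  unfold pdf1; positivity

lemma pdf1_le (x : ℝ) : pdf1 x ≤ (Real.sqrt (2 * Real.pi))⁻¹ := by
  unfold pdf1
  have h1 : Real.exp (-(1/2 : ℝ) * x ^ 2) ≤ 1 :=
    Real.exp_le_one_iff.2 (by nlinarith [sq_nonneg x])
  have h2 : (0:ℝ) ≤ (Real.sqrt (2 * Real.pi))⁻¹ := by positivity
  nlinarith

lemma continuous_pdf1 : Continuous pdf1 := by
  unfold pdf1; continuity

lemma integrable_pdf1 : Integrable pdf1 := by
  unfold pdf1
  refine Integrable.const_mul ?_ _
  have := integrable_exp_neg_mul_sq (by norm_num : (0:ℝ) < 1/2)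
  simpa using this

lemma integral_pdf1 : ∫ x, pdf1 x = 1 := by
  unfold pdf1
  rw [integral_const_mul]
  have : ∫ x : ℝ, Real.exp (-(1/2 : ℝ) * x ^ 2) = Real.sqrt (Real.pi / (1/2)) :=
    integral_gaussian (1/2)
  rw [this]
  have h2 : Real.pi / (1/2 : ℝ) = 2 * Real.pi := by ring
  rw [h2, inv_mul_cancel₀]
  positivity

lemma integral_exp_sq_pdf1 : ∫ x, Real.exp ((1/4 : ℝ) * x ^ 2) * pdf1 x = Real.sqrt 2 := by
  have h : ∀ x : ℝ, Real.exp ((1/4 : ℝ) * x ^ 2) * pdf1 x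
      = (Real.sqrt (2 * Real.pi))⁻¹ * Real.exp (-(1/4 : ℝ) * x ^ 2) := by
    intro x
    unfold pdf1
    rw [← mul_assoc, mul_comm (Real.exp _), mul_assoc, ← Real.exp_add]
    ring_nf
  simp_rw [h]
  rw [integral_const_mul, integral_gaussian]
  have h4 : Real.pi / (1/4 : ℝ) = 4 * Real.pi := by ring
  rw [h4]
  have : Real.sqrt (4 * Real.pi) = Real.sqrt 2 * Real.sqrt (2 * Real.pi) := by
    rw [← Real.sqrt_mul (by norm_num)]; ring_nf
  rw [this]
  have hne : Real.sqrt (2 * Real.pi) ≠ 0 := by positivity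
  field_simp

lemma exp_sq_pdf1_integrable : Integrable (fun x => Real.exp ((1/4 : ℝ) * x ^ 2) * pdf1 x) := by
  have h : (fun x : ℝ => Real.exp ((1/4 : ℝ) * x ^ 2) * pdf1 x)
      = fun x => (Real.sqrt (2 * Real.pi))⁻¹ * Real.exp (-(1/4 : ℝ) * x ^ 2) := by
    funext x
    unfold pdf1
    rw [← mul_assoc, mul_comm (Real.exp _), mul_assoc, ← Real.exp_add]
    ring_nf
  rw [h]
  exact (integrable_exp_neg_mul_sq (by norm_num : (0:ℝ) < 1/4)).const_mul _

noncomputable def gmeas (N : ℕ) : Measure (Fin N → ℝ) :=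
  (volume : Measure (Fin N → ℝ)).withDensity
    (fun g => ENNReal.ofReal (∏ k, pdf1 (g k)))

lemma measurable_prod_pdf1 (N : ℕ) :
    Measurable (fun g : Fin N → ℝ => ENNReal.ofReal (∏ k, pdf1 (g k))) := by
  apply ENNReal.measurable_ofReal.comp
  exact Finset.measurable_prod _ (fun k _ => continuous_pdf1.measurable.comp (measurable_pi_apply k))

/-- Product formula for Gaussian-type lintegrals. -/
lemma lintegral_prod_coord (N : ℕ) (f : Fin N → ℝ → ℝ)
    (hInt : ∀ k, Integrable (f k)) (hnn : ∀ k x, 0 ≤ f k x) :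
    ∫⁻ g : Fin N → ℝ, ENNReal.ofReal (∏ k, f k (g k))
      = ENNReal.ofReal (∏ k, ∫ x, f k x) := by
  rw [← MeasureTheory.integral_fintype_prod_eq_prod (𝕜 := ℝ) (ι := Fin N) f]
  rw [MeasureTheory.ofReal_integral_eq_lintegral_ofReal]
  · rw [volume_pi]
  · exact Integrable.fintype_prod hInt
  · exact Filter.Eventually.of_forall (fun g => Finset.prod_nonneg (fun k _ => hnn k (g k)))

instance gmeas_prob (N : ℕ) : IsProbabilityMeasure (gmeas N) := by
  constructor
  rw [gmeas, withDensity_apply _ MeasurableSet.univ, Measure.restrict_univ,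
    lintegral_prod_coord N (fun _ => pdf1) (fun _ => integrable_pdf1) (fun _ x => pdf1_nonneg x)]
  simp [integral_pdf1]

lemma gmeas_apply (N : ℕ) {A : Set (Fin N → ℝ)} (hA : MeasurableSet A) :
    gmeas N A = ∫⁻ g in A, ENNReal.ofReal (∏ k, pdf1 (g k)) := by
  rw [gmeas, withDensity_apply _ hA]

/-- `∏ pdf1` in exponential form. -/
lemma prod_pdf1_eq (N : ℕ) (g : Fin N → ℝ) :
    ∏ k, pdf1 (g k) = (Real.sqrt (2 * Real.pi))⁻¹ ^ N
      * Real.exp (-(1/2 : ℝ) * ∑ k, (g k) ^ 2) := by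
  unfold pdf1
  rw [Finset.prod_mul_distrib, Finset.prod_const, ← Real.exp_sum]
  rw [Finset.card_univ, Fintype.card_fin]
  congr 1
  rw [Finset.mul_sum]

lemma Tnorm {N : ℕ} {Q : Fin N → Fin N → ℝ}
    (hQ : ∀ k l, ∑ m, Q m k * Q m l = if k = l then (1:ℝ) else 0)
    (g : Fin N → ℝ) : ∑ k, (∑ l, Q k l * g l) ^ 2 = ∑ k, (g k) ^ 2 := by
  have h1 : ∀ k, (∑ l, Q k l * g l) ^ 2 = ∑ l, ∑ m, g l * g m * (Q k l * Q k m) := by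
    intro k
    rw [sq, Finset.sum_mul_sum]
    exact Finset.sum_congr rfl fun l _ => Finset.sum_congr rfl fun m _ => by ring
  simp_rw [h1]
  rw [Finset.sum_comm]
  have h2 : ∀ l, ∑ k, ∑ m, g l * g m * (Q k l * Q k m)
      = ∑ m, g l * g m * (∑ k, Q k l * Q k m) := by
    intro l
    rw [Finset.sum_comm]
    exact Finset.sum_congr rfl fun m _ => by rw [Finset.mul_sum]
  simp_rw [h2, hQ]
  simp [mul_ite, Finset.sum_ite_eq, sq]

lemma measurable_T {N : ℕ} (Q : Fin N → Fin N → ℝ) :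
    Measurable (fun g : Fin N → ℝ => fun k => ∑ l, Q k l * g l) :=
  measurable_pi_lambda _ (fun k => Finset.measurable_sum _
    fun l _ => (measurable_pi_apply l).const_mul _)

lemma gmeas_map_rot {N : ℕ} {Q : Fin N → Fin N → ℝ}
    (hQ : ∀ k l, ∑ m, Q m k * Q m l = if k = l then (1:ℝ) else 0) :
    Measure.map (fun g : Fin N → ℝ => fun k => ∑ l, Q k l * g l) (gmeas N) = gmeas N := by
  classical
  set T : (Fin N → ℝ) → (Fin N → ℝ) := fun g k => ∑ l, Q k l * g l with hTdef
  set M : Matrix (Fin N) (Fin N) ℝ := Matrix.of Q with hM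
  have hMtM : M.transpose * M = 1 := by
    ext k l
    simpa [Matrix.mul_apply, Matrix.transpose_apply, hM, Matrix.one_apply] using hQ k l
  have hdetM : |Matrix.det M| = 1 := by
    have h2 : M.det * M.det = 1 := by
      have := congrArg Matrix.det hMtM
      rwa [Matrix.det_mul, Matrix.det_transpose, Matrix.det_one] at this
    rcases mul_self_eq_one_iff.mp h2 with h | h <;> rw [h] <;> norm_num
  have hdet : |LinearMap.det (Matrix.toLin' M)| = 1 := by rwa [LinearMap.det_toLin']
  have hdet0 : LinearMap.det (Matrix.toLin' M) ≠ 0 := by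
    intro h; rw [h] at hdet; norm_num at hdet
  have hT : T = ⇑(Matrix.toLin' M) := by
    funext g k
    simp [hTdef, Matrix.toLin'_apply, Matrix.mulVec, dotProduct, hM]
  have hvol : Measure.map T (volume : Measure (Fin N → ℝ)) = volume := by
    rw [hT, Real.map_linearMap_volume_pi_eq_smul_volume_pi hdet0, abs_inv, hdet]
    simp
  have hTm : Measurable T := measurable_T Q
  ext s hs
  rw [Measure.map_apply hTm hs, gmeas_apply _ (hTm hs), gmeas_apply _ hs]
  have hstep : ∫⁻ g in T ⁻¹' s, ENNReal.ofReal (∏ k, pdf1 (g k))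
      = ∫⁻ g in T ⁻¹' s, ENNReal.ofReal (∏ k, pdf1 (T g k)) := by
    apply lintegral_congr
    intro g
    rw [prod_pdf1_eq, prod_pdf1_eq]
    have : ∑ k, (T g k) ^ 2 = ∑ k, (g k) ^ 2 := Tnorm hQ g
    rw [this]
  rw [hstep]
  have := setLIntegral_map (μ := (volume : Measure (Fin N → ℝ))) hs
    (measurable_prod_pdf1 N) hTm
  rw [← this, hvol]

/-- Householder: for unit vectors `a, b` there is a symmetric orthogonal `Q` with `Q a = b`. -/
lemma householder {N : ℕ} (a b : Fin N → ℝ)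
    (ha : ∑ k, (a k) ^ 2 = 1) (hb : ∑ k, (b k) ^ 2 = 1) :
    ∃ Q : Fin N → Fin N → ℝ, (∀ k l, Q k l = Q l k) ∧
      (∀ k l, ∑ m, Q m k * Q m l = if k = l then (1:ℝ) else 0) ∧
      (∀ k, ∑ l, Q k l * a l = b k) := by
  classical
  by_cases hab : a = b
  · refine ⟨fun k l => if k = l then 1 else 0, ?_, ?_, ?_⟩
    · intro k l; by_cases h : k = l <;> simp [h, eq_comm]
    · intro k l
      simp [ite_and, Finset.sum_ite_eq, eq_comm]
    · intro k
      simp [ite_mul, Finset.sum_ite_eq, hab]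
  · set d : ℝ := ∑ k, (a k - b k) ^ 2 with hd
    have hdpos : 0 < d := by
      rcases Function.ne_iff.mp hab with ⟨k, hk⟩
      have h1 : (0:ℝ) < (a k - b k) ^ 2 := by
        have hne : a k - b k ≠ 0 := sub_ne_zero.mpr hk
        positivity
      have h2 : ∀ m ∈ Finset.univ, (0:ℝ) ≤ (a m - b m) ^ 2 := fun m _ => sq_nonneg _
      calc (0:ℝ) < (a k - b k) ^ 2 := h1
        _ ≤ d := Finset.single_le_sum h2 (Finset.mem_univ k)
    set u : Fin N → ℝ := fun k => (a k - b k) / Real.sqrt d with hu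
    have hds : Real.sqrt d ^ 2 = d := Real.sq_sqrt hdpos.le
    have hdsne : Real.sqrt d ≠ 0 := by positivity
    have hunorm : ∑ m, (u m) ^ 2 = 1 := by
      simp only [hu, div_pow, ← Finset.sum_div, hds]
      exact div_self hdpos.ne'
    have hua : ∑ l, u l * a l = Real.sqrt d / 2 := by
      have key : ∑ l, (a l - b l) * a l = d / 2 := by
        have e1 : d = ∑ l, ((a l)^2 - 2 * (a l * b l) + (b l)^2) := by
          rw [hd]; exact Finset.sum_congr rfl fun l _ => by ring
        have e2 : ∑ l, ((a l)^2 - 2 * (a l * b l) + (b l)^2)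
            = ∑ l, (a l)^2 - 2 * ∑ l, (a l * b l) + ∑ l, (b l)^2 := by
          rw [Finset.sum_add_distrib, Finset.sum_sub_distrib, Finset.mul_sum]
        have e3 : ∑ l, (a l - b l) * a l = ∑ l, (a l)^2 - ∑ l, (a l * b l) := by
          rw [← Finset.sum_sub_distrib]
          exact Finset.sum_congr rfl fun l _ => by ring
        rw [e3, ha]
        rw [e1, e2, ha, hb] at *
        nlinarith [e1, e2]
      simp only [hu, div_mul_eq_mul_div, ← Finset.sum_div, key]
      field_simp
      nlinarith [hds]
    refine ⟨fun k l => (if k = l then 1 else 0) - 2 * u k * u l, ?_, ?_, ?_⟩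
    · intro k l; by_cases h : k = l <;> simp [h, eq_comm] <;> ring
    · intro k l
      have expand : ∀ m, ((if m = k then (1:ℝ) else 0) - 2 * u m * u k)
          * ((if m = l then (1:ℝ) else 0) - 2 * u m * u l)
          = (if m = k then (1:ℝ) else 0) * (if m = l then (1:ℝ) else 0)
            - 2 * u k * ((if m = l then (1:ℝ) else 0) * u m)
            - 2 * u l * ((if m = k then (1:ℝ) else 0) * u m)
            + 4 * (u k * u l) * (u m)^2 := by
        intro m; ring
      simp_rw [expand]
      rw [Finset.sum_add_distrib, Finset.sum_sub_distrib, Finset.sum_sub_distrib,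
        ← Finset.mul_sum, ← Finset.mul_sum, ← Finset.mul_sum, hunorm]
      simp only [ite_mul, one_mul, zero_mul, Finset.sum_ite_eq, Finset.mem_univ, if_true]
      by_cases h : k = l
      · subst h; simp; ring
      · simp [h, (Ne.symm h : l ≠ k)]
        ring
    · intro k
      have expand : ∀ l, ((if k = l then (1:ℝ) else 0) - 2 * u k * u l) * a l
          = (if k = l then (1:ℝ) else 0) * a l - 2 * u k * (u l * a l) := by intro l; ring
      simp_rw [expand]
      rw [Finset.sum_sub_distrib, ← Finset.mul_sum, hua]
      simp only [ite_mul, one_mul, zero_mul, Finset.sum_ite_eq, Finset.mem_univ, if_true]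
      have : 2 * u k * (Real.sqrt d / 2) = a k - b k := by
        rw [hu]
        field_simp
      rw [this]
      ring

lemma measurable_sumsq (N : ℕ) : Measurable (fun g : Fin N → ℝ => ∑ k, (g k) ^ 2) :=
  Finset.measurable_sum _ fun k _ => (measurable_pi_apply k).pow_const 2

set_option maxHeartbeats 1000000 in
lemma gmeas_chernoff (N : ℕ) :
    gmeas N {g | 4 * (N:ℝ) ≤ ∑ k, (g k) ^ 2} ≤ ENNReal.ofReal (Real.exp (-(N:ℝ)/2)) := by
  classical
  set B : Set (Fin N → ℝ) := {g | 4 * (N:ℝ) ≤ ∑ k, (g k) ^ 2} with hB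
  have hBm : MeasurableSet B := measurableSet_le measurable_const (measurable_sumsq N)
  set F : (Fin N → ℝ) → ENNReal :=
    fun g => ENNReal.ofReal (∏ k, Real.exp ((1/4:ℝ) * (g k)^2) * pdf1 (g k)) with hF
  have hFm : Measurable F := by
    apply ENNReal.measurable_ofReal.comp
    apply Finset.measurable_prod
    intro k _
    have h1 : Measurable (fun g : Fin N → ℝ => Real.exp ((1/4:ℝ) * (g k)^2)) :=
      Real.measurable_exp.comp (((measurable_pi_apply k).pow_const 2).const_mul _)
    exact h1.mul (continuous_pdf1.measurable.comp (measurable_pi_apply k))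
  have h1 : ENNReal.ofReal (Real.exp (N:ℝ)) * gmeas N B
      = ∫⁻ g in B, ENNReal.ofReal (Real.exp (N:ℝ)) * ENNReal.ofReal (∏ k, pdf1 (g k)) := by
    rw [gmeas_apply N hBm, lintegral_const_mul _ (measurable_prod_pdf1 N)]
  have h2 : ∀ g ∈ B, ENNReal.ofReal (Real.exp (N:ℝ)) * ENNReal.ofReal (∏ k, pdf1 (g k))
      ≤ F g := by
    intro g hg
    rw [hF, ← ENNReal.ofReal_mul (Real.exp_pos _).le]
    apply ENNReal.ofReal_le_ofReal
    rw [Finset.prod_mul_distrib, ← Real.exp_sum]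
    have hsum : (N:ℝ) ≤ ∑ k, (1/4:ℝ) * (g k)^2 := by
      rw [← Finset.mul_sum]
      have h4 : 4 * (N:ℝ) ≤ ∑ k, (g k)^2 := hg
      linarith
    have hee := Real.exp_le_exp.mpr hsum
    have hprod : (0:ℝ) ≤ ∏ k, pdf1 (g k) := Finset.prod_nonneg fun k _ => pdf1_nonneg _
    nlinarith [Real.exp_pos (∑ k, (1/4:ℝ) * (g k)^2)]
  have h3 : ∫⁻ g in B, ENNReal.ofReal (Real.exp (N:ℝ)) * ENNReal.ofReal (∏ k, pdf1 (g k))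
      ≤ ∫⁻ g in B, F g := setLIntegral_mono hFm h2
  have h4 : ∫⁻ g in B, F g ≤ ∫⁻ g, F g := lintegral_mono' Measure.restrict_le_self le_rfl
  have h5 : ∫⁻ g, F g = ENNReal.ofReal ((Real.sqrt 2) ^ N) := by
    rw [hF]
    rw [lintegral_prod_coord N (fun _ x => Real.exp ((1/4:ℝ) * x^2) * pdf1 x)
      (fun _ => exp_sq_pdf1_integrable)
      (fun k x => mul_nonneg (Real.exp_pos _).le (pdf1_nonneg x))]
    rw [integral_exp_sq_pdf1]
    simp
  have key : ENNReal.ofReal (Real.exp (N:ℝ)) * gmeas N B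
      ≤ ENNReal.ofReal ((Real.sqrt 2) ^ N) := by
    rw [h1, ← h5]
    exact h3.trans h4
  have hexpN : ENNReal.ofReal (Real.exp (N:ℝ)) ≠ 0 := by
    simp [Real.exp_pos]
  have hexpNtop : ENNReal.ofReal (Real.exp (N:ℝ)) ≠ ⊤ := ENNReal.ofReal_ne_top
  have hle : gmeas N B ≤ ENNReal.ofReal ((Real.sqrt 2) ^ N) / ENNReal.ofReal (Real.exp (N:ℝ)) := by
    rw [ENNReal.le_div_iff_mul_le (Or.inl hexpN) (Or.inl hexpNtop), mul_comm]
    exact key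
  refine hle.trans ?_
  rw [← ENNReal.ofReal_div_of_pos (Real.exp_pos _)]
  apply ENNReal.ofReal_le_ofReal
  rw [div_le_iff₀ (Real.exp_pos _), ← Real.exp_add]
  have hh : -(N:ℝ)/2 + (N:ℝ) = (1/2:ℝ) * N := by ring
  rw [hh]
  have h12 : Real.sqrt 2 ≤ Real.exp (1/2 : ℝ) := by
    have ha : Real.sqrt 2 ≤ 3/2 := by
      rw [show (3/2 : ℝ) = Real.sqrt ((3/2)^2) by rw [Real.sqrt_sq]; norm_num]
      exact Real.sqrt_le_sqrt (by norm_num)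
    have hbb : (3/2 : ℝ) ≤ Real.exp (1/2 : ℝ) := by
      have := Real.add_one_le_exp (1/2 : ℝ)
      linarith
    linarith
  calc (Real.sqrt 2) ^ N ≤ (Real.exp (1/2 : ℝ)) ^ N :=
        pow_le_pow_left₀ (Real.sqrt_nonneg 2) h12 N
    _ = Real.exp ((1/2:ℝ) * N) := by
        rw [← Real.exp_nat_mul]; ring_nf

lemma gmeas_coord (N : ℕ) (k₀ : Fin N) (ε : ℝ) (hε : 0 < ε) :
    gmeas N {g | |g k₀| < ε} ≤ ENNReal.ofReal (2 * ε / Real.sqrt (2 * Real.pi)) := by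
  classical
  set s : Set ℝ := Set.Ioo (-ε) ε with hs
  have hsm : MeasurableSet s := measurableSet_Ioo
  have hAeq : {g : Fin N → ℝ | |g k₀| < ε} = {g | g k₀ ∈ s} := by
    ext g; simp [hs, abs_lt, Set.mem_Ioo, and_comm]
  have hAm : MeasurableSet {g : Fin N → ℝ | g k₀ ∈ s} := (measurable_pi_apply k₀) hsm
  set f : Fin N → ℝ → ℝ := fun k => if k = k₀ then s.indicator pdf1 else pdf1 with hf
  have hint : ∀ k, Integrable (f k) := by
    intro k
    rw [hf]
    by_cases h : k = k₀ <;> simp [h]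
    · exact integrable_pdf1.indicator hsm
    · exact integrable_pdf1
  have hnn : ∀ k x, 0 ≤ f k x := by
    intro k x
    rw [hf]
    by_cases h : k = k₀ <;> simp [h]
    · exact Set.indicator_nonneg (fun y _ => pdf1_nonneg y) x
    · exact pdf1_nonneg x
  have key : gmeas N {g | g k₀ ∈ s} = ∫⁻ g : Fin N → ℝ, ENNReal.ofReal (∏ k, f k (g k)) := by
    rw [gmeas_apply N hAm, ← lintegral_indicator hAm]
    apply lintegral_congr
    intro g
    by_cases hg : g k₀ ∈ s
    · rw [Set.indicator_of_mem (show g ∈ {g : Fin N → ℝ | g k₀ ∈ s} from hg)]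
      congr 1
      apply Finset.prod_congr rfl
      intro k _
      rw [hf]
      by_cases h : k = k₀ <;> simp [h]
      rw [Set.indicator_of_mem hg]
    · rw [Set.indicator_of_notMem (show g ∉ {g : Fin N → ℝ | g k₀ ∈ s} from hg)]
      have : ∏ k, f k (g k) = 0 := by
        apply Finset.prod_eq_zero (Finset.mem_univ k₀)
        rw [hf]
        simp [Set.indicator_of_notMem hg]
      rw [this]
      simp
  rw [hAeq, key, lintegral_prod_coord N f hint hnn]
  apply ENNReal.ofReal_le_ofReal
  have hival : ∀ k, ∫ x, f k x = if k = k₀ then ∫ x in s, pdf1 x else 1 := by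
    intro k
    rw [hf]
    by_cases h : k = k₀ <;> simp [h]
    · exact integral_indicator hsm
    · exact integral_pdf1
  rw [Finset.prod_congr rfl (fun k _ => hival k), Finset.prod_ite_eq' Finset.univ k₀
    (fun _ => ∫ x in s, pdf1 x)]
  simp only [Finset.mem_univ, if_true]
  have hb : ∫ x in s, pdf1 x ≤ ∫ x in s, (Real.sqrt (2 * Real.pi))⁻¹ := by
    apply setIntegral_mono_on integrable_pdf1.integrableOn
    · refine integrableOn_const ?_
      rw [hs, Real.volume_Ioo]
      exact ENNReal.ofReal_ne_top
    · exact hsm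
    · intro x _; exact pdf1_le x
  refine hb.trans ?_
  rw [setIntegral_const, hs, Real.volume_real_Ioo_of_le (by linarith)]
  rw [smul_eq_mul]
  rw [div_eq_mul_inv]
  nlinarith [Real.sqrt_nonneg (2 * Real.pi), inv_nonneg.mpr (Real.sqrt_nonneg (2 * Real.pi))]

lemma gmeas_anticonc {N : ℕ} (hN : 0 < N) (t : ℝ) (ht : 0 < t) (a : Fin N → ℝ)
    (ha : ∑ k, (a k) ^ 2 = (N:ℝ)) :
    gmeas N {g | |∑ k, g k * a k| < t * Real.sqrt (∑ k, (g k) ^ 2)}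
      ≤ ENNReal.ofReal (4 * t / Real.sqrt (2 * Real.pi))
        + ENNReal.ofReal (Real.exp (-(N:ℝ)/2)) := by
  classical
  have hNpos : (0:ℝ) < N := Nat.cast_pos.mpr hN
  have hsN : (0:ℝ) < Real.sqrt N := Real.sqrt_pos.mpr hNpos
  set A : Set (Fin N → ℝ) := {g | |∑ k, g k * a k| < 2 * t * Real.sqrt N} with hA
  set B : Set (Fin N → ℝ) := {g | 4 * (N:ℝ) ≤ ∑ k, (g k) ^ 2} with hB
  have hsub : {g : Fin N → ℝ | |∑ k, g k * a k| < t * Real.sqrt (∑ k, (g k) ^ 2)} ⊆ A ∪ B := by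
    intro g hg
    by_cases hgB : g ∈ B
    · exact Or.inr hgB
    · left
      have h1 : ∑ k, (g k) ^ 2 < 4 * (N:ℝ) := lt_of_not_ge hgB
      have h2 : Real.sqrt (∑ k, (g k) ^ 2) ≤ 2 * Real.sqrt N := by
        have h2a : Real.sqrt (∑ k, (g k) ^ 2) ≤ Real.sqrt (4 * N) := Real.sqrt_le_sqrt h1.le
        rwa [show (4:ℝ) * N = 2^2 * N by norm_num, Real.sqrt_mul (by positivity),
          Real.sqrt_sq (by norm_num : (0:ℝ) ≤ 2)] at h2a
      have hg' : |∑ k, g k * a k| < t * Real.sqrt (∑ k, (g k) ^ 2) := hg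
      have : |∑ k, g k * a k| < 2 * t * Real.sqrt N := by nlinarith
      exact this
  have hmono := measure_mono (μ := gmeas N) hsub
  have hunion := measure_union_le (μ := gmeas N) A B
  set k₀ : Fin N := ⟨0, hN⟩ with hk₀
  set b : Fin N → ℝ := fun k => a k / Real.sqrt N with hb
  have hbnorm : ∑ k, (b k) ^ 2 = 1 := by
    simp only [hb, div_pow, ← Finset.sum_div, ha, Real.sq_sqrt hNpos.le]
    exact div_self hNpos.ne'
  set e₀ : Fin N → ℝ := fun k => if k = k₀ then 1 else 0 with he₀
  have he₀norm : ∑ k, (e₀ k) ^ 2 = 1 := by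
    simp [he₀, ite_pow, Finset.sum_ite_eq]
  obtain ⟨Q, hQsym, hQorth, hQb⟩ := householder b e₀ hbnorm he₀norm
  have hQa : ∀ m, ∑ k, Q m k * a k = Real.sqrt N * e₀ m := by
    intro m
    have h0 : ∀ k, Q m k * a k = Real.sqrt N * (Q m k * b k) := by
      intro k
      rw [hb]
      field_simp
    simp_rw [h0, ← Finset.mul_sum, hQb m]
  have hAm : MeasurableSet A := by
    apply measurableSet_lt
    · exact (Finset.measurable_sum _ fun k _ => (measurable_pi_apply k).mul_const _).abs
    · exact measurable_const
  have hmap := gmeas_map_rot hQorth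
  have hinner : ∀ g : Fin N → ℝ, ∑ k, (∑ l, Q k l * g l) * a k = Real.sqrt N * g k₀ := by
    intro g
    have e1 : ∀ k, (∑ l, Q k l * g l) * a k = ∑ l, (Q k l * a k) * g l := by
      intro k
      rw [Finset.sum_mul]
      exact Finset.sum_congr rfl fun l _ => by ring
    simp_rw [e1]
    rw [Finset.sum_comm]
    have e2 : ∀ l, ∑ k, (Q k l * a k) * g l = (Real.sqrt N * e₀ l) * g l := by
      intro l
      rw [← Finset.sum_mul]
      congr 1
      rw [← hQa l]
      exact Finset.sum_congr rfl fun k _ => by rw [hQsym k l]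
    simp_rw [e2]
    have e3 : ∀ l, (Real.sqrt N * e₀ l) * g l = if l = k₀ then Real.sqrt N * g l else 0 := by
      intro l; rw [he₀]; by_cases h : l = k₀ <;> simp [h]
    simp_rw [e3]
    rw [Finset.sum_ite_eq' Finset.univ k₀ (fun l => Real.sqrt N * g l)]
    simp
  have hgA : gmeas N A = gmeas N {g : Fin N → ℝ | |g k₀| < 2 * t} := by
    conv_lhs => rw [← hmap]
    rw [Measure.map_apply (measurable_T Q) hAm]
    congr 1
    ext g
    simp only [Set.mem_preimage, hA, Set.mem_setOf_eq]
    rw [hinner g, abs_mul, abs_of_nonneg (Real.sqrt_nonneg _)]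
    constructor
    · intro h; nlinarith [abs_nonneg (g k₀)]
    · intro h; nlinarith [abs_nonneg (g k₀)]
  have hcoord := gmeas_coord N k₀ (2*t) (by linarith)
  calc gmeas N {g | |∑ k, g k * a k| < t * Real.sqrt (∑ k, (g k) ^ 2)}
      ≤ gmeas N (A ∪ B) := hmono
    _ ≤ gmeas N A + gmeas N B := hunion
    _ ≤ ENNReal.ofReal (2 * (2*t) / Real.sqrt (2 * Real.pi))
        + ENNReal.ofReal (Real.exp (-(N:ℝ)/2)) := by
        apply add_le_add
        · rw [hgA]; exact hcoord
        · exact gmeas_chernoff N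
    _ = ENNReal.ofReal (4 * t / Real.sqrt (2 * Real.pi))
        + ENNReal.ofReal (Real.exp (-(N:ℝ)/2)) := by
        congr 2
        ring

lemma measurable_entry {N r : ℕ} (l : Fin N) (i : Fin r) :
    Measurable (fun X : Fin N → Fin r → ℝ => X l i) :=
  (measurable_pi_apply i).comp (measurable_pi_apply l)

lemma mu_event_invariance {N r : ℕ} (μ : Measure (Fin N → Fin r → ℝ))
    (hL : ∀ Q : Fin N → Fin N → ℝ,
      (∀ k l : Fin N, ∑ m, Q m k * Q m l = (if k = l then (1:ℝ) else 0)) →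
      Measure.map (fun X => fun k i => ∑ l, Q k l * X l i) μ = μ)
    (Q : Fin N → Fin N → ℝ)
    (hQ : ∀ k l : Fin N, ∑ m, Q m k * Q m l = (if k = l then (1:ℝ) else 0))
    (c : Fin N → ℝ) (j : Fin r) (s : ℝ) :
    μ {X | |∑ k, c k * X k j| < s}
      = μ {X | |∑ l, (∑ k, Q k l * c k) * X l j| < s} := by
  classical
  have hfm : Measurable (fun X : Fin N → Fin r → ℝ => fun k i => ∑ l, Q k l * X l i) :=
    measurable_pi_lambda _ fun k => measurable_pi_lambda _ fun i =>
      Finset.measurable_sum _ fun l _ =>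
        (measurable_entry l i).const_mul _
  have hmeasSet : MeasurableSet {X : Fin N → Fin r → ℝ | |∑ k, c k * X k j| < s} := by
    apply measurableSet_lt
    · exact (Finset.measurable_sum _ fun k _ =>
        (measurable_entry k j).const_mul _).abs
    · exact measurable_const
  conv_lhs => rw [← hL Q hQ]
  rw [Measure.map_apply hfm hmeasSet]
  congr 1
  ext X
  simp only [Set.mem_preimage, Set.mem_setOf_eq]
  have hswap : ∑ k, c k * ∑ l, Q k l * X l j = ∑ l, (∑ k, Q k l * c k) * X l j := by
    have e1 : ∀ k, c k * ∑ l, Q k l * X l j = ∑ l, (Q k l * c k) * X l j := by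
      intro k
      rw [Finset.mul_sum]
      exact Finset.sum_congr rfl fun l _ => by ring
    simp_rw [e1]
    rw [Finset.sum_comm]
    exact Finset.sum_congr rfl fun l _ => by rw [Finset.sum_mul]
  rw [hswap]

/-- Anti-concentration of the Stiefel correlations at scale `N^(-1/2)`: there exist
constants `C(r), c(r) > 0` depending only on `r` such that for any `N`, any probability
measure `μ` on `N×r` matrices supported on the normalized Stiefel manifold and
invariant under left and right orthogonal transformations, and any fixed Stiefel
frame `V`, for every `t > 0`,
`μ(|m_{ij}(X)| < t/√N) ≤ (4/√(2π)) t + C(r) exp(-c(r) t √N)`. -/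
theorem stmt_12 (r : ℕ) (hr : 0 < r) :
    ∃ C c : ℝ, 0 < C ∧ 0 < c ∧
      ∀ (N : ℕ), 0 < N →
      ∀ (μ : Measure (Fin N → Fin r → ℝ)), IsProbabilityMeasure μ →
      (∀ᵐ X ∂μ, ∀ i j : Fin r,
        ∑ k, X k i * X k j = (N : ℝ) * (if i = j then 1 else 0)) →
      (∀ Q : Fin N → Fin N → ℝ,
        (∀ k l : Fin N, ∑ m, Q m k * Q m l = (if k = l then (1 : ℝ) else 0)) →
        Measure.map (fun X => fun k i => ∑ l, Q k l * X l i) μ = μ) →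
      (∀ H : Fin r → Fin r → ℝ,
        (∀ i j : Fin r, ∑ m, H m i * H m j = (if i = j then (1 : ℝ) else 0)) →
        Measure.map (fun X => fun k i => ∑ l, X k l * H l i) μ = μ) →
      ∀ (V : Fin N → Fin r → ℝ),
        (∀ i j : Fin r, ∑ k, V k i * V k j = (N : ℝ) * (if i = j then 1 else 0)) →
      ∀ i j : Fin r, ∀ t : ℝ, 0 < t →
        (μ {X | |(1 / (N : ℝ)) * ∑ k, V k i * X k j| < t / Real.sqrt N}).toReal ≤
          (4 / Real.sqrt (2 * Real.pi)) * t + C * Real.exp (-c * t * Real.sqrt N) := by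
  classical
  refine ⟨1, 1/2, one_pos, by norm_num, ?_⟩
  intro N hN μ hμ hae hL hR V hV i j t ht
  have hNpos : (0:ℝ) < N := Nat.cast_pos.mpr hN
  have hsN : (0:ℝ) < Real.sqrt N := Real.sqrt_pos.mpr hNpos
  have hsqrt2pi : (0:ℝ) < Real.sqrt (2*Real.pi) := by positivity
  by_cases ht1 : 1 < t
  · -- trivial case t > 1
    have hb : (μ {X | |(1 / (N : ℝ)) * ∑ k, V k i * X k j| < t / Real.sqrt N}).toReal ≤ 1 := by
      have h1 : μ {X | |(1 / (N : ℝ)) * ∑ k, V k i * X k j| < t / Real.sqrt N} ≤ 1 :=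
        prob_le_one
      have h2 := ENNReal.toReal_mono (by norm_num) h1
      simpa using h2
    have hle4 : Real.sqrt (2*Real.pi) ≤ 4 := by
      rw [show (4:ℝ) = Real.sqrt 16 by
        rw [show (16:ℝ) = 4^2 by norm_num, Real.sqrt_sq (by norm_num : (0:ℝ) ≤ 4)]]
      exact Real.sqrt_le_sqrt (by nlinarith [Real.pi_le_four])
    have h2 : (1:ℝ) ≤ 4 / Real.sqrt (2*Real.pi) * t := by
      have h3 : (1:ℝ) ≤ 4 / Real.sqrt (2*Real.pi) := by
        rw [le_div_iff₀ hsqrt2pi]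
        linarith
      nlinarith
    have h4 : 0 < Real.exp (-(1/2 : ℝ) * t * Real.sqrt N) := Real.exp_pos _
    have h5 : (0:ℝ) < 1 := one_pos
    nlinarith
  push_neg at ht1
  -- rewrite the event
  have hiff : ∀ x : ℝ, ((1/(N:ℝ)) * x < t / Real.sqrt N ↔ x < t * Real.sqrt N) := by
    intro x
    rw [one_div, inv_mul_eq_div, div_lt_iff₀ hNpos, div_mul_eq_mul_div, mul_div_assoc,
      Real.div_sqrt]
  have hset : {X : Fin N → Fin r → ℝ | |(1/(N:ℝ)) * ∑ k, V k i * X k j| < t / Real.sqrt N}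
      = {X | |∑ k, V k i * X k j| < t * Real.sqrt N} := by
    ext X
    simp only [Set.mem_setOf_eq]
    rw [abs_mul, abs_of_pos (by positivity : (0:ℝ) < 1/(N:ℝ))]
    exact hiff _
  set Ev : Set (Fin N → Fin r → ℝ) := {X | |∑ k, V k i * X k j| < t * Real.sqrt N} with hEv
  -- a.e. column norm
  have haj : ∀ᵐ X ∂μ, ∑ k, (X k j) ^ 2 = (N:ℝ) := by
    filter_upwards [hae] with X hX
    have h := hX j j
    simp only [if_pos rfl, mul_one] at h
    simpa [pow_two] using h
  -- invariance: the event has the same measure as the Gaussian-direction event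
  have hVa : ∑ k, (V k i) ^ 2 = (N:ℝ) := by
    have h := hV i i
    simp only [if_pos rfl, mul_one] at h
    simpa [pow_two] using h
  have hFg : ∀ g : Fin N → ℝ, g ≠ 0 →
      μ {X | |∑ k, g k * X k j| < t * Real.sqrt (∑ k, (g k)^2)} = μ Ev := by
    intro g hg
    have hgnorm : (0:ℝ) < ∑ k, (g k)^2 := by
      rcases Function.ne_iff.mp hg with ⟨k, hk⟩
      have hk' : g k ≠ 0 := by simpa using hk
      have h1 : (0:ℝ) < (g k)^2 := by positivity
      exact lt_of_lt_of_le h1 (Finset.single_le_sum (f := fun m => (g m)^2)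
        (fun m _ => sq_nonneg _) (Finset.mem_univ k))
    set ng : ℝ := Real.sqrt (∑ k, (g k)^2) with hngdef
    have hng : 0 < ng := Real.sqrt_pos.mpr hgnorm
    set w : Fin N → ℝ := fun k => g k / ng with hw
    have hwnorm : ∑ k, (w k)^2 = 1 := by
      simp only [hw, div_pow, ← Finset.sum_div, hngdef, Real.sq_sqrt hgnorm.le]
      exact div_self hgnorm.ne'
    set aV : Fin N → ℝ := fun k => V k i / Real.sqrt N with haV
    have haVnorm : ∑ k, (aV k)^2 = 1 := by
      simp only [haV, div_pow, ← Finset.sum_div, hVa, Real.sq_sqrt hNpos.le]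
      exact div_self hNpos.ne'
    obtain ⟨Q, hQsym, hQorth, hQaV⟩ := householder aV w haVnorm hwnorm
    have h1 := mu_event_invariance μ hL Q hQorth (fun k => V k i) j (t * Real.sqrt N)
    have h2 : ∀ l, ∑ k, Q k l * V k i = (Real.sqrt N / ng) * g l := by
      intro l
      have e0 : ∀ k, Q k l * V k i = Real.sqrt N * (Q l k * aV k) := by
        intro k
        rw [hQsym k l, haV]
        field_simp
      simp_rw [e0, ← Finset.mul_sum, hQaV l]
      rw [hw]
      field_simp
    have hc : (0:ℝ) < Real.sqrt N / ng := by positivity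
    have hceq : (Real.sqrt N / ng) * (t * ng) = t * Real.sqrt N := by
      field_simp
    have hEv' : μ Ev = μ {X | |∑ k, V k i * X k j| < t * Real.sqrt N} := rfl
    rw [hEv', h1]
    congr 1
    ext X
    simp only [Set.mem_setOf_eq]
    have e : ∑ l, (∑ k, Q k l * V k i) * X l j = (Real.sqrt N / ng) * ∑ l, g l * X l j := by
      simp_rw [h2]
      rw [Finset.mul_sum]
      exact Finset.sum_congr rfl fun l _ => by ring
    rw [e, abs_mul, abs_of_pos hc, ← hceq, mul_lt_mul_iff_right₀ hc]
  -- gmeas has no atom at 0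
  set k₀ : Fin N := ⟨0, hN⟩ with hk₀
  have h0 : gmeas N {(0 : Fin N → ℝ)} = 0 := by
    have hvol0 : (volume : Measure (Fin N → ℝ)) {(0 : Fin N → ℝ)} = 0 := by
      have hsub0 : ({(0 : Fin N → ℝ)} : Set (Fin N → ℝ))
          ⊆ Function.eval k₀ ⁻¹' ({0} : Set ℝ) := by
        intro g hg
        simp only [Set.mem_singleton_iff] at hg
        simp [hg, Function.eval]
      apply measure_mono_null hsub0
      rw [volume_pi]
      exact Measure.pi_eval_preimage_null _ (measure_singleton 0)
    exact withDensity_absolutelyContinuous _ _ hvol0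
  -- Fubini setup
  set S : Set ((Fin N → ℝ) × (Fin N → Fin r → ℝ)) :=
    {p | |∑ k, p.1 k * p.2 k j| < t * Real.sqrt (∑ k, (p.1 k)^2)} with hS
  have hSm : MeasurableSet S := by
    apply measurableSet_lt
    · apply Measurable.abs
      apply Finset.measurable_sum
      intro k _
      exact ((measurable_pi_apply k).comp measurable_fst).mul
        ((measurable_entry k j).comp measurable_snd)
    · apply Measurable.const_mul
      apply Real.continuous_sqrt.measurable.comp
      exact Finset.measurable_sum _ fun k _ =>
        (((measurable_pi_apply k).comp measurable_fst)).pow_const 2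
  set F : (Fin N → ℝ) → ℝ≥0∞ :=
    fun g => μ {X | |∑ k, g k * X k j| < t * Real.sqrt (∑ k, (g k)^2)} with hF
  have hstep2 : ∫⁻ g, F g ∂(gmeas N) = μ Ev := by
    have hsub : {g : Fin N → ℝ | ¬ (F g = μ Ev)} ⊆ {(0 : Fin N → ℝ)} := by
      intro g hg
      by_contra hg0
      simp only [Set.mem_singleton_iff] at hg0
      exact hg (hFg g hg0)
    have hnull : gmeas N {g : Fin N → ℝ | ¬ (F g = μ Ev)} = 0 := measure_mono_null hsub h0
    have hae0 : ∀ᵐ g ∂(gmeas N), F g = μ Ev := by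
      rw [MeasureTheory.ae_iff]
      exact hnull
    rw [lintegral_congr_ae hae0, lintegral_const, measure_univ, mul_one]
  have hprod1 : ((gmeas N).prod μ) S = ∫⁻ g, F g ∂(gmeas N) := by
    rw [Measure.prod_apply hSm]
    exact lintegral_congr fun g => rfl
  have hprod2 : ((gmeas N).prod μ) S
      = ∫⁻ X, gmeas N ((fun g => (g, X)) ⁻¹' S) ∂μ := by
    rw [Measure.prod_apply_symm hSm]
  have hbound : ∫⁻ X, gmeas N ((fun g => (g, X)) ⁻¹' S) ∂μ
      ≤ ENNReal.ofReal (4 * t / Real.sqrt (2 * Real.pi))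
        + ENNReal.ofReal (Real.exp (-(N:ℝ)/2)) := by
    have hb : ∀ᵐ X ∂μ, gmeas N ((fun g => (g, X)) ⁻¹' S)
        ≤ ENNReal.ofReal (4 * t / Real.sqrt (2 * Real.pi))
          + ENNReal.ofReal (Real.exp (-(N:ℝ)/2)) := by
      filter_upwards [haj] with X hX
      have hlem := gmeas_anticonc hN t ht (fun k => X k j) hX
      have hseteq : ((fun g : Fin N → ℝ => (g, X)) ⁻¹' S)
          = {g : Fin N → ℝ | |∑ k, g k * X k j| < t * Real.sqrt (∑ k, (g k)^2)} := rfl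
      rw [hseteq]
      exact hlem
    calc ∫⁻ X, gmeas N ((fun g => (g, X)) ⁻¹' S) ∂μ
        ≤ ∫⁻ _X, (ENNReal.ofReal (4 * t / Real.sqrt (2 * Real.pi))
          + ENNReal.ofReal (Real.exp (-(N:ℝ)/2))) ∂μ := lintegral_mono_ae hb
      _ = _ := by rw [lintegral_const, measure_univ, mul_one]
  have hfinal : μ {X | |(1/(N:ℝ)) * ∑ k, V k i * X k j| < t / Real.sqrt N}
      ≤ ENNReal.ofReal (4 * t / Real.sqrt (2 * Real.pi))
        + ENNReal.ofReal (Real.exp (-(N:ℝ)/2)) := by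
    rw [hset, ← hstep2, ← hprod1, hprod2]
    exact hbound
  have hfinal2 : μ {X | |(1/(N:ℝ)) * ∑ k, V k i * X k j| < t / Real.sqrt N}
      ≤ ENNReal.ofReal (4 * t / Real.sqrt (2 * Real.pi) + Real.exp (-(N:ℝ)/2)) := by
    rw [ENNReal.ofReal_add (by positivity) (Real.exp_pos _).le]
    exact hfinal
  have htr := ENNReal.toReal_le_of_le_ofReal (by positivity) hfinal2
  refine htr.trans ?_
  have e1 : 4 * t / Real.sqrt (2*Real.pi) = 4 / Real.sqrt (2*Real.pi) * t := by ring
  have e2 : Real.exp (-(N:ℝ)/2) ≤ Real.exp (-(1/2 : ℝ) * t * Real.sqrt N) := by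
    apply Real.exp_le_exp.mpr
    have h2 : Real.sqrt N * Real.sqrt N = (N:ℝ) := Real.mul_self_sqrt hNpos.le
    have h3 : (1:ℝ) ≤ Real.sqrt N := Real.one_le_sqrt.mpr (by exact_mod_cast hN)
    nlinarith
  rw [e1]
  linarith
end
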